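/- Let q^{(σ)} be a family of sampling probabilities and let q̃_k (k ∈ ℕ) be a family of asymptotic-expansion coefficients for q^{(σ)}. Then for every k ∈ ℕ and every i = 2,…,d: q̃_k(e_i) = 1_{k=0} θ P_{1i} + 1_{k≥1} [ −θ ∑_{j=2}^d (δ_{ij} + P_{1i} − P_{ji}) q̃_{k−1}(e_j) + ∑_{j=2}^d q̃_{k−1}(e_i + e_j) ], where δ_{ij} is the Kronecker delta. -/

import Mathlib

open Finset Filter Asymptotics

noncomputable section

/-- The `i`-th standard unit vector of `ℤ^d`. -/
def stdE {d : ℕ} (i : Fin d) : Fin d → ℤ := fun j => if j = i then 1 else 0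

/-- The total size `‖n‖ = n_1 + ⋯ + n_d` of a configuration. -/
def tot {d : ℕ} (n : Fin d → ℤ) : ℤ := ∑ i, n i

/-- `n ∈ ℕ^d`, i.e. all components of `n : ℤ^d` are nonnegative. -/
def IsNatVec {d : ℕ} (n : Fin d → ℤ) : Prop := ∀ i, 0 ≤ n i

/-- A family of sampling probabilities `q^{(σ)} : ℤ^d → ℝ`, indexed by `σ > 0`:
`q^{(σ)}(0) = 1`; `q^{(σ)}(n) = 0` if `n` has a negative component; the consistency
condition `∑_i q^{(σ)}(n+e_i) = q^{(σ)}(n)` holds on `ℕ^d`; and the sampling recursion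
holds on `ℕ^d ∖ {0}`.  (Allele `1` is represented by the index `0 : Fin d`.) -/
def IsSamplingFamily {d : ℕ} [NeZero d] (θ : ℝ) (P : Fin d → Fin d → ℝ)
    (q : ℝ → (Fin d → ℤ) → ℝ) : Prop :=
  (∀ σ : ℝ, 0 < σ → q σ 0 = 1) ∧
  (∀ σ : ℝ, 0 < σ → ∀ n : Fin d → ℤ, (∃ i, n i < 0) → q σ n = 0) ∧
  (∀ σ : ℝ, 0 < σ → ∀ n : Fin d → ℤ, IsNatVec n →
    ∑ i, q σ (n + stdE i) = q σ n) ∧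
  (∀ σ : ℝ, 0 < σ → ∀ n : Fin d → ℤ, IsNatVec n → n ≠ 0 →
    ((tot n : ℝ) * ((tot n : ℝ) - 1 + θ) + ((tot n : ℝ) - (n 0 : ℝ)) * σ) * q σ n =
      (∑ i, (n i : ℝ) * ((n i : ℝ) - 1) * q σ (n - stdE i))
      + (∑ i, ∑ j, (n i : ℝ) * θ * P j i * q σ (n - stdE i + stdE j))
      + σ * (tot n : ℝ) * ∑ i ∈ univ.erase 0, q σ (n + stdE i))

/-- A family of asymptotic-expansion coefficients `q̃_k : ℤ^d → ℝ` for a family of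
sampling probabilities `q^{(σ)}`:  `q̃_0(0) = 1`, `q̃_k(0) = 0` for `k ≥ 1`,
`q̃_k(n) = 0` if `n` has a negative component, and for every `n ∈ ℕ^d` and `K ∈ ℕ`,
`σ^{‖n‖-n_1} q^{(σ)}(n) - ∑_{k=0}^K q̃_k(n) σ^{-k} = O(σ^{-(K+1)})` as `σ → ∞`. -/
def IsExpansionCoeffs {d : ℕ} [NeZero d] (q : ℝ → (Fin d → ℤ) → ℝ)
    (qt : ℕ → (Fin d → ℤ) → ℝ) : Prop :=
  qt 0 0 = 1 ∧
  (∀ k : ℕ, 1 ≤ k → qt k 0 = 0) ∧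
  (∀ k : ℕ, ∀ n : Fin d → ℤ, (∃ i, n i < 0) → qt k n = 0) ∧
  (∀ n : Fin d → ℤ, IsNatVec n → ∀ K : ℕ,
    (fun σ : ℝ => σ ^ (tot n - n 0) * q σ n
        - ∑ k ∈ range (K + 1), qt k n * σ ^ (-(k : ℤ)))
      =O[atTop] fun σ : ℝ => σ ^ (-(K + 1 : ℤ)))

/-! The recursion at `e_i` together with the consistency condition at `0` gives, for every `σ > 0`,
`σ q(e_i) = θ P_{1i} + σ⁻¹ L(σ)`, where `L` is a fixed linear combination of the rescaled
probabilities `σ q(e_j)` and `σ² q(e_i + e_j)`, `j ≥ 2`. Each of those has an asymptotic expansion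
in powers of `σ⁻¹` with coefficients `q̃_k`, hence so has `L`; dividing by `σ` shifts the
coefficients by one, and uniqueness of asymptotic expansions identifies the coefficients of both
sides. -/

theorem zpow_neg_natCast_succ {K : Type*} [DivisionRing K] (σ : K) (k : ℕ) :
    σ ^ (-((k + 1 : ℕ) : ℤ)) = σ⁻¹ * σ ^ (-(k : ℤ)) := by
  simp only [zpow_neg, zpow_natCast, pow_succ, mul_inv_rev]

def HasAsymptoticExpansion (f : ℝ → ℝ) (c : ℕ → ℝ) : Prop :=
  ∀ K : ℕ, (fun σ : ℝ => f σ - ∑ k ∈ range (K + 1), c k * σ ^ (-(k : ℤ)))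
    =O[atTop] fun σ : ℝ => σ ^ (-(K + 1 : ℤ))

namespace HasAsymptoticExpansion

variable {f g : ℝ → ℝ} {c e : ℕ → ℝ}

theorem congr' (h : HasAsymptoticExpansion f c) (hfg : f =ᶠ[atTop] g) :
    HasAsymptoticExpansion g c :=
  fun K => (h K).congr' (hfg.sub EventuallyEq.rfl) EventuallyEq.rfl

theorem add (hf : HasAsymptoticExpansion f c) (hg : HasAsymptoticExpansion g e) :
    HasAsymptoticExpansion (fun σ => f σ + g σ) (fun k => c k + e k) := by
  intro K
  refine ((hf K).add (hg K)).congr (fun σ => ?_) fun _ => rfl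
  simp only [add_mul, sum_add_distrib]
  ring

theorem sub (hf : HasAsymptoticExpansion f c) (hg : HasAsymptoticExpansion g e) :
    HasAsymptoticExpansion (fun σ => f σ - g σ) (fun k => c k - e k) := by
  intro K
  refine ((hf K).sub (hg K)).congr (fun σ => ?_) fun _ => rfl
  simp only [sub_mul, sum_sub_distrib]
  ring

theorem const_mul (a : ℝ) (hf : HasAsymptoticExpansion f c) :
    HasAsymptoticExpansion (fun σ => a * f σ) (fun k => a * c k) := by
  intro K
  refine ((hf K).const_mul_left a).congr (fun σ => ?_) fun _ => rfl
  simp only [mul_sub, mul_sum, mul_assoc]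

theorem sum {ι : Type*} (s : Finset ι) {F : ι → ℝ → ℝ} {C : ι → ℕ → ℝ}
    (h : ∀ j ∈ s, HasAsymptoticExpansion (F j) (C j)) :
    HasAsymptoticExpansion (fun σ => ∑ j ∈ s, F j σ) (fun k => ∑ j ∈ s, C j k) := fun K =>
  (IsBigO.fun_sum fun j hj => h j hj K).congr
    (fun σ => by simp only [sum_mul, sum_sub_distrib]; rw [sum_comm]) fun _ => rfl

theorem isBigO_sub_sum_range (h : HasAsymptoticExpansion f c) (K : ℕ) :
    (fun σ : ℝ => f σ - ∑ k ∈ range K, c k * σ ^ (-(k : ℤ)))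
      =O[atTop] fun σ : ℝ => σ ^ (-(K : ℤ)) := by
  cases K with
  | succ K => simpa using h K
  | zero =>
    have hinv : (fun σ : ℝ => σ ^ (-1 : ℤ)) =O[atTop] fun _ => (1 : ℝ) := by
      simpa using (tendsto_inv_atTop_zero (𝕜 := ℝ)).isBigO_one (F := ℝ)
    have hf : f =O[atTop] fun _ => (1 : ℝ) :=
      (((h 0).trans (by simpa using hinv)).add (isBigO_const_one ℝ (c 0) atTop)).congr
        (fun σ => by simp) fun _ => rfl
    simpa using hf

theorem const_add_inv_mul (a : ℝ) (h : HasAsymptoticExpansion g c) :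
    HasAsymptoticExpansion (fun σ => a + σ⁻¹ * g σ) (fun k => if k = 0 then a else c (k - 1)) := by
  intro K
  refine ((isBigO_refl (fun σ : ℝ => σ⁻¹) atTop).mul (h.isBigO_sub_sum_range K)).congr
    (fun σ => ?_) (fun σ => by simpa using (zpow_neg_natCast_succ σ K).symm)
  simp only [sum_range_succ', Nat.succ_ne_zero, if_false, Nat.add_sub_cancel, if_true,
    zpow_neg_natCast_succ, mul_sub, mul_sum, mul_left_comm σ⁻¹]
  simp only [Nat.cast_zero, neg_zero, zpow_zero, mul_one]
  ring

theorem eq_zero_of_zero (h : HasAsymptoticExpansion (fun _ => 0) c) : c = 0 := by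
  funext k
  refine Nat.strong_induction_on k fun k ih => ?_
  have hk : (fun σ : ℝ => -(c k * σ ^ (-(k : ℤ)))) =O[atTop] fun σ : ℝ => σ ^ (-(k + 1 : ℤ)) :=
    (h k).congr (fun σ => by
      rw [sum_range_succ, sum_eq_zero fun j hj => by simp [ih j (mem_range.1 hj)]]
      ring) fun _ => rfl
  have hconst : (fun _ : ℝ => -c k) =O[atTop] fun σ : ℝ => σ⁻¹ :=
    ((isBigO_refl (fun σ : ℝ => σ ^ (k : ℤ)) atTop).mul hk).congr'
      (by filter_upwards [eventually_gt_atTop 0] with σ hσ; simp [zpow_neg]; field_simp)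
      (by filter_upwards [eventually_gt_atTop 0] with σ hσ
          rw [← zpow_add₀ hσ.ne', ← zpow_neg_one]; ring_nf)
  simpa using tendsto_nhds_unique (hconst.trans_tendsto tendsto_inv_atTop_zero) tendsto_const_nhds

theorem unique (hc : HasAsymptoticExpansion f c) (he : HasAsymptoticExpansion f e) : c = e :=
  sub_eq_zero.1 <| eq_zero_of_zero <| (hc.sub he).congr' (by simp)

end HasAsymptoticExpansion

section StdBasis

variable {d : ℕ}

theorem stdE_apply_of_ne {i j : Fin d} (h : j ≠ i) : stdE i j = 0 := if_neg h

theorem isNatVec_stdE (i : Fin d) : IsNatVec (stdE i) := fun j => by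
  unfold stdE; split_ifs <;> norm_num

theorem IsNatVec.add {n m : Fin d → ℤ} (hn : IsNatVec n) (hm : IsNatVec m) : IsNatVec (n + m) :=
  fun l => add_nonneg (hn l) (hm l)

theorem stdE_ne_zero (i : Fin d) : stdE i ≠ 0 := fun h => by
  simpa [stdE] using congrFun h i

theorem tot_stdE (i : Fin d) : tot (stdE i) = 1 := by simp [tot, stdE]

theorem tot_add (n m : Fin d → ℤ) : tot (n + m) = tot n + tot m := sum_add_distrib

end StdBasis

namespace IsSamplingFamily

variable {d : ℕ} [NeZero d] {θ : ℝ} {P : Fin d → Fin d → ℝ} {q : ℝ → (Fin d → ℤ) → ℝ}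
  {σ : ℝ} {i : Fin d}

theorem sum_apply_stdE (hq : IsSamplingFamily θ P q) (hσ : 0 < σ) :
    ∑ j, q σ (stdE j) = 1 := by
  simpa [hq.1 σ hσ] using hq.2.2.1 σ hσ 0 fun _ => le_rfl

theorem recursion_stdE (hq : IsSamplingFamily θ P q) (hσ : 0 < σ) (hi : i ≠ 0) :
    (θ + σ) * q σ (stdE i)
      = θ * ∑ j, P j i * q σ (stdE j) + σ * ∑ j ∈ univ.erase 0, q σ (stdE i + stdE j) := by
  have hrec := hq.2.2.2 σ hσ (stdE i) (isNatVec_stdE i) (stdE_ne_zero i)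
  have hcoalescence : ∑ l, (stdE i l : ℝ) * ((stdE i l : ℝ) - 1) * q σ (stdE i - stdE l) = 0 :=
    sum_eq_zero fun l _ => by by_cases h : l = i <;> simp [stdE, h]
  have hmutation : ∑ l, ∑ j, (stdE i l : ℝ) * θ * P j l * q σ (stdE i - stdE l + stdE j)
      = θ * ∑ j, P j i * q σ (stdE j) := by
    rw [sum_eq_single i (fun l _ h => sum_eq_zero fun j _ => by simp [stdE, h]) (by simp),
      mul_sum]
    exact sum_congr rfl fun j _ => by simp [stdE]; ring
  rw [hcoalescence, hmutation, tot_stdE, stdE_apply_of_ne (Ne.symm hi)] at hrec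
  push_cast at hrec
  linear_combination hrec

/-- The recursion at `e_i`, with `q(e_1)` eliminated through the consistency condition at `0`. -/
theorem mul_apply_stdE (hq : IsSamplingFamily θ P q) (hσ : 0 < σ) (hi : i ≠ 0) :
    σ * q σ (stdE i) = θ * P 0 i + σ⁻¹ *
      (-θ * ∑ j ∈ univ.erase 0, ((if i = j then 1 else 0) + P 0 i - P j i) * (σ * q σ (stdE j))
        + ∑ j ∈ univ.erase 0, σ ^ 2 * q σ (stdE i + stdE j)) := by
  have hsum := hq.sum_apply_stdE hσ
  have hrec := hq.recursion_stdE hσ hi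
  rw [← add_sum_erase _ _ (mem_univ 0)] at hsum hrec
  have hδ : ∑ j ∈ univ.erase 0, ((if i = j then 1 else 0) + P 0 i - P j i) * (σ * q σ (stdE j))
      = σ * (q σ (stdE i) + P 0 i * ∑ j ∈ univ.erase 0, q σ (stdE j)
        - ∑ j ∈ univ.erase 0, P j i * q σ (stdE j)) := by
    have hdiag : ∑ j ∈ univ.erase 0, (if i = j then 1 else 0) * (σ * q σ (stdE j))
        = σ * q σ (stdE i) := by simp [hi]
    simp only [add_mul, sub_mul, sum_add_distrib, sum_sub_distrib]
    rw [hdiag, mul_sub, mul_add]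
    simp only [mul_sum, mul_left_comm _ σ]
  have hsq : ∑ j ∈ univ.erase 0, σ ^ 2 * q σ (stdE i + stdE j)
      = σ * (σ * ∑ j ∈ univ.erase 0, q σ (stdE i + stdE j)) := by
    rw [mul_sum, mul_sum]; exact sum_congr rfl fun j _ => by ring
  rw [hδ, hsq]
  field_simp
  linear_combination hrec + θ * P 0 i * hsum

end IsSamplingFamily

namespace IsExpansionCoeffs

variable {d : ℕ} [NeZero d] {q : ℝ → (Fin d → ℤ) → ℝ} {qt : ℕ → (Fin d → ℤ) → ℝ}

theorem hasAsymptoticExpansion (hqt : IsExpansionCoeffs q qt) {n : Fin d → ℤ} (hn : IsNatVec n)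
    {m : ℕ} (hm : tot n - n 0 = m) :
    HasAsymptoticExpansion (fun σ => σ ^ m * q σ n) (fun k => qt k n) := fun K => by
  simpa only [hm, zpow_natCast] using hqt.2.2.2 n hn K

theorem hasAsymptoticExpansion_stdE (hqt : IsExpansionCoeffs q qt) {j : Fin d} (hj : j ≠ 0) :
    HasAsymptoticExpansion (fun σ => σ * q σ (stdE j)) (fun k => qt k (stdE j)) := by
  simpa using hqt.hasAsymptoticExpansion (isNatVec_stdE j) (m := 1)
    (by simp [tot_stdE, stdE_apply_of_ne (Ne.symm hj)])

theorem hasAsymptoticExpansion_stdE_add_stdE (hqt : IsExpansionCoeffs q qt) {i j : Fin d}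
    (hi : i ≠ 0) (hj : j ≠ 0) :
    HasAsymptoticExpansion (fun σ => σ ^ 2 * q σ (stdE i + stdE j))
      (fun k => qt k (stdE i + stdE j)) :=
  hqt.hasAsymptoticExpansion ((isNatVec_stdE i).add (isNatVec_stdE j))
    (by rw [tot_add, tot_stdE, tot_stdE, Pi.add_apply, stdE_apply_of_ne (Ne.symm hi),
      stdE_apply_of_ne (Ne.symm hj)]; norm_num)

end IsExpansionCoeffs

theorem boundary_unfit_general {d : ℕ} (θ : ℝ)
    (P : Fin (d + 2) → Fin (d + 2) → ℝ)
    (q : ℝ → (Fin (d + 2) → ℤ) → ℝ) (qt : ℕ → (Fin (d + 2) → ℤ) → ℝ)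
    (hq : IsSamplingFamily θ P q) (hqt : IsExpansionCoeffs q qt)
    (k : ℕ) (i : Fin (d + 2)) (hi : i ≠ 0) :
    qt k (stdE i)
      = (if k = 0 then θ * P 0 i else 0)
        + (if 1 ≤ k then
            - θ * ∑ j ∈ univ.erase 0,
                ((if i = j then (1 : ℝ) else 0) + P 0 i - P j i) * qt (k - 1) (stdE j)
            + ∑ j ∈ univ.erase 0, qt (k - 1) (stdE i + stdE j)
          else 0) := by
  have hL := ((HasAsymptoticExpansion.sum (univ.erase 0) fun j hj =>
      (hqt.hasAsymptoticExpansion_stdE (ne_of_mem_erase hj)).const_mul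
        ((if i = j then 1 else 0) + P 0 i - P j i)).const_mul (-θ)).add
    (HasAsymptoticExpansion.sum (univ.erase 0) fun j hj =>
      hqt.hasAsymptoticExpansion_stdE_add_stdE hi (ne_of_mem_erase hj))
  have hexpansion := (hL.const_add_inv_mul (θ * P 0 i)).congr' <| by
    filter_upwards [eventually_gt_atTop 0] with σ hσ using (hq.mul_apply_stdE hσ hi).symm
  have hcoeff := congrFun ((hqt.hasAsymptoticExpansion_stdE hi).unique hexpansion) k
  rcases k with _ | k <;> simpa using hcoeff

/-- **Theorem 4.3(II)** (boundary, unfit alleles): for `i = 2,…,d`,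
`q̃_k(e_i) = 1_{k=0} θP_{1i} + 1_{k≥1}[ -θ ∑_{j=2}^d (δ_{ij} + P_{1i} - P_{ji}) q̃_{k-1}(e_j)
+ ∑_{j=2}^d q̃_{k-1}(e_i+e_j) ]`. -/
theorem boundary_unfit {d : ℕ} (θ : ℝ) (hθ : 0 < θ)
    (P : Fin (d + 2) → Fin (d + 2) → ℝ)
    (hPnonneg : ∀ i j, 0 ≤ P i j) (hProw : ∀ i, ∑ j, P i j = 1)
    (q : ℝ → (Fin (d + 2) → ℤ) → ℝ) (qt : ℕ → (Fin (d + 2) → ℤ) → ℝ)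
    (hq : IsSamplingFamily θ P q) (hqt : IsExpansionCoeffs q qt)
    (k : ℕ) (i : Fin (d + 2)) (hi : i ≠ 0) :
    qt k (stdE i)
      = (if k = 0 then θ * P 0 i else 0)
        + (if 1 ≤ k then
            - θ * ∑ j ∈ univ.erase 0,
                ((if i = j then (1 : ℝ) else 0) + P 0 i - P j i) * qt (k - 1) (stdE j)
            + ∑ j ∈ univ.erase 0, qt (k - 1) (stdE i + stdE j)
          else 0) :=
  boundary_unfit_general θ P q qt hq hqt k i hi
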